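/- With ℓ_0 = z d/dz + μ + 1/2 + ρ/z and ℓ_n = ℓ_0 (zℓ_0)^n as above, assuming [μ, ρ] = ρ (which holds since ρ raises the grading defined by μ by 1), the operators satisfy the Virasoro (Witt) bracket relation [ℓ_n, ℓ_m] = (m − n) ℓ_{n+m} for all n, m ≥ 0. -/
import Mathlib

noncomputable def ellZero {V : Type*} [AddCommGroup V] [Module ℂ V]
    (μ ρ : V →ₗ[ℂ] V) (f : ℤ →₀ V) : ℤ →₀ V :=
  (f.sum fun i v => Finsupp.single i ((i : ℂ) • v + μ v + (2 : ℂ)⁻¹ • v))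
    + Finsupp.mapDomain (· - 1) (Finsupp.mapRange ρ (map_zero ρ) f)

noncomputable def ellOp {V : Type*} [AddCommGroup V] [Module ℂ V]
    (μ ρ : V →ₗ[ℂ] V) (n : ℕ) : (ℤ →₀ V) → (ℤ →₀ V) :=
  ellZero μ ρ ∘ (fun f => Finsupp.mapDomain (· + 1) (ellZero μ ρ f))^[n]

section aux
variable {V : Type*} [AddCommGroup V] [Module ℂ V] (μ ρ : V →ₗ[ℂ] V)

lemma ellZero_apply (f : ℤ →₀ V) (i : ℤ) :
    ellZero μ ρ f i = (i : ℂ) • f i + μ (f i) + (2 : ℂ)⁻¹ • f i + ρ (f (i + 1)) := by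
  unfold ellZero
  rw [Finsupp.add_apply, Finsupp.sum_apply]
  have h2 : Finsupp.mapDomain (· - 1) (Finsupp.mapRange ρ (map_zero ρ) f) i
      = ρ (f (i + 1)) := by
    have := Finsupp.mapDomain_apply (f := fun x : ℤ => x - 1)
      (sub_left_injective) (Finsupp.mapRange ρ (map_zero ρ) f) (i + 1)
    simpa using this
  rw [h2]
  congr 1
  rw [Finsupp.sum]
  simp only [Finsupp.single_apply]
  rw [Finset.sum_ite_eq' f.support i]
  by_cases h : i ∈ f.support
  · simp [h]
  · simp [h, Finsupp.notMem_support_iff.mp h]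

/-- `ℓ₀` as a linear map. -/
noncomputable def Lmap : (ℤ →₀ V) →ₗ[ℂ] (ℤ →₀ V) where
  toFun := ellZero μ ρ
  map_add' f g := by
    ext i
    simp only [ellZero_apply, Finsupp.add_apply, map_add, smul_add]
    abel
  map_smul' c f := by
    ext i
    simp only [ellZero_apply, Finsupp.smul_apply, map_smul, RingHom.id_apply, smul_add]
    rw [smul_comm (i : ℂ) c, smul_comm ((2:ℂ)⁻¹) c]

/-- `M_z ∘ ℓ₀` as a linear map. -/
noncomputable def Tmap : (ℤ →₀ V) →ₗ[ℂ] (ℤ →₀ V) :=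
  (Finsupp.lmapDomain V ℂ (· + 1)).comp (Lmap μ ρ)

lemma Tmap_apply (f : ℤ →₀ V) :
    Tmap μ ρ f = Finsupp.mapDomain (· + 1) (ellZero μ ρ f) := rfl

lemma shift_apply (f : ℤ →₀ V) (i : ℤ) :
    Finsupp.mapDomain (· + 1) f i = f (i - 1) := by
  have := Finsupp.mapDomain_apply (f := fun x : ℤ => x + 1)
    (add_left_injective 1) f (i - 1)
  simpa using this

/-- The key commutation relation `ℓ₀ M_z = M_z (ℓ₀ + 1)`, i.e. `L T = T L + T`. -/
lemma LT_comm : Lmap μ ρ * Tmap μ ρ = Tmap μ ρ * Lmap μ ρ + Tmap μ ρ := by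
  refine LinearMap.ext fun f => Finsupp.ext fun i => ?_
  simp only [Module.End.mul_apply, LinearMap.add_apply, Finsupp.add_apply,
    Tmap_apply, Lmap, LinearMap.coe_mk, AddHom.coe_mk]
  simp only [ellZero_apply, shift_apply, Finsupp.add_apply, map_add, map_smul,
    smul_add, add_sub_cancel_right, sub_add_cancel]
  push_cast
  module

lemma LTpow (k : ℕ) :
    Lmap μ ρ * (Tmap μ ρ) ^ k
      = (Tmap μ ρ) ^ k * Lmap μ ρ + (k : ℂ) • (Tmap μ ρ) ^ k := by
  induction k with
  | zero => simp
  | succ k ih =>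
    have : Lmap μ ρ * Tmap μ ρ ^ (k + 1) = (Lmap μ ρ * Tmap μ ρ ^ k) * Tmap μ ρ := by
      rw [mul_assoc, ← pow_succ]
    rw [this, ih, add_mul, mul_assoc, LT_comm, smul_mul_assoc, mul_add,
      ← mul_assoc, ← pow_succ]
    push_cast
    rw [add_smul, one_smul]
    abel

lemma ellOp_eq (n : ℕ) (f : ℤ →₀ V) :
    ellOp μ ρ n f = (Lmap μ ρ * (Tmap μ ρ) ^ n) f := by
  have hT : (fun f : ℤ →₀ V => Finsupp.mapDomain (· + 1) (ellZero μ ρ f))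
      = ⇑(Tmap μ ρ) := rfl
  rw [ellOp, Function.comp_apply, hT, ← Module.End.pow_apply, Module.End.mul_apply]
  rfl

end aux

/-- assuming `[μ, ρ] = ρ`, the operators satisfy the Witt bracket
relation `[ℓ_n, ℓ_m] = (m - n) ℓ_{n+m}` for all `n, m ≥ 0`. -/
theorem stmt_9 (V : Type*) [AddCommGroup V] [Module ℂ V] [FiniteDimensional ℂ V]
    (μ ρ : V →ₗ[ℂ] V)
    (hcomm : μ ∘ₗ ρ - ρ ∘ₗ μ = ρ)
    (n m : ℕ) (f : ℤ →₀ V) :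
    ellOp μ ρ n (ellOp μ ρ m f) - ellOp μ ρ m (ellOp μ ρ n f)
      = ((m : ℂ) - (n : ℂ)) • ellOp μ ρ (n + m) f := by
  simp only [ellOp_eq]
  set L := Lmap μ ρ with hL
  set T := Tmap μ ρ with hT
  have key : ∀ a b : ℕ, L * T ^ a * (L * T ^ b)
      = L * L * T ^ (a + b) - (a : ℂ) • (L * T ^ (a + b)) := by
    intro a b
    have ht : T ^ a * L = L * T ^ a - (a : ℂ) • T ^ a := by
      rw [LTpow]; abel
    calc L * T ^ a * (L * T ^ b) = L * (T ^ a * L) * T ^ b := by noncomm_ring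
      _ = L * (L * T ^ a - (a : ℂ) • T ^ a) * T ^ b := by rw [ht]
      _ = L * L * T ^ (a + b) - (a : ℂ) • (L * T ^ (a + b)) := by
          rw [mul_sub, mul_smul_comm, sub_mul, smul_mul_assoc, mul_assoc,
            mul_assoc L (T ^ a), ← pow_add, ← mul_assoc]
  rw [← Module.End.mul_apply, ← Module.End.mul_apply, ← LinearMap.sub_apply,
    ← LinearMap.smul_apply]
  congr 1
  rw [key, key, Nat.add_comm m n]
  module
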